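/- Assume additionally 1 < c < 2 and: (U(x) − U(x_U⁻))/(x_U − x)^{c−1} → U_0 for some U_0 < 0, and U'(x)·(x_U − x)^{2−c} → (c−1)·|U_0|, both as x → x_U⁻. Define, for w ∈ (w_c, x_V/x_U), θ(w) = w·U(x₁(w))·V'(w·x₁(w)) / ( U'(x₁(w))·V(w·x₁(w)) + w·U(x₁(w))·V'(w·x₁(w)) ). Then there exists a constant A > 0 such that θ(w)/(w − w_c)^{(2−c)/(c−1)} → A as w → w_c from the right; i.e., the fraction of shared bonds vanishes like A·(w − w_c)^{(2−c)/(c−1)} above the transition. -/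

import Mathlib

/-!
As `w ↓ w_c` the root `x₁(w)` tends to `x_U`. Put `ε = x_U - x₁(w)`. Subtracting
`L · V(w_c x_U) = 1` from `U(x₁) V(w x₁) = 1` and using `U(x₁) - L ≈ U₀ ε^(c-1)` and
`V(w x₁) - V(w_c x_U) ≈ V'(w_c x_U) ((w - w_c) x₁ - w_c ε)`, where `ε = o(ε^(c-1))`, gives
`ε^(c-1) ∼ R (w - w_c)` with `R = -L V'(w_c x_U) x_U / (U₀ V(w_c x_U)) > 0`. In `θ` the term
`U'(x₁) ≈ (c-1)|U₀| ε^(c-2)` dominates the denominator, so `θ ∼ const · ε^(2-c)`, and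
raising the first estimate to the power `(2-c)/(c-1)` gives the claim.
-/

open Filter Topology Set
open Real

section PowerSeries

variable {a : ℕ → ℝ} {R : ℝ}

lemma summable_mul_pow_of_abs_le (ha : ∀ n, 0 ≤ a n) {x t : ℝ} (hxt : |x| ≤ t)
    (ht : Summable fun n => a n * t ^ n) : Summable fun n => a n * x ^ n :=
  ht.of_norm_bounded fun n => by
    rw [norm_mul, norm_pow, Real.norm_of_nonneg (ha n), Real.norm_eq_abs]
    gcongr
    exact ha n

lemma mul_pow_sub_le_tsum_sub (ha : ∀ n, 0 ≤ a n) (M : ℕ) {x y : ℝ} (hx : 0 ≤ x) (hxy : x ≤ y)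
    (hy : Summable fun n => a n * y ^ n) :
    a M * (y ^ M - x ^ M) ≤ (∑' n, a n * y ^ n) - ∑' n, a n * x ^ n := by
  have hxs := summable_mul_pow_of_abs_le ha (by rwa [abs_of_nonneg hx]) hy
  rw [← hy.tsum_sub hxs, mul_sub]
  refine (hy.sub hxs).le_tsum M fun n _ => sub_nonneg.2 ?_
  gcongr
  exact ha n

lemma monotoneOn_tsum_mul_pow (ha : ∀ n, 0 ≤ a n)
    (hconv : ∀ x, 0 ≤ x → x < R → Summable fun n => a n * x ^ n) :
    MonotoneOn (fun x => ∑' n, a n * x ^ n) (Ico 0 R) := fun x hx y hy hxy =>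
  sub_nonneg.1 <| by
    simpa using mul_pow_sub_le_tsum_sub ha 0 hx.1 hxy (hconv y (hx.1.trans hxy) hy.2)

lemma strictMonoOn_tsum_mul_pow (ha : ∀ n, 0 ≤ a n)
    (hconv : ∀ x, 0 ≤ x → x < R → Summable fun n => a n * x ^ n)
    {M : ℕ} (hM : 1 ≤ M) (haM : 0 < a M) :
    StrictMonoOn (fun x => ∑' n, a n * x ^ n) (Ico 0 R) := fun x hx y hy hxy => by
  have hpow : 0 < a M * (y ^ M - x ^ M) :=
    mul_pos haM (sub_pos.2 (pow_lt_pow_left₀ hxy hx.1 (by omega)))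
  linarith [mul_pow_sub_le_tsum_sub ha M hx.1 hxy.le (hconv y (hx.1.trans hxy.le) hy.2)]

lemma analyticOnNhd_tsum_mul_pow (ha : ∀ n, 0 ≤ a n)
    (hconv : ∀ x, 0 ≤ x → x < R → Summable fun n => a n * x ^ n) :
    AnalyticOnNhd ℝ (fun x => ∑' n, a n * x ^ n) (Metric.ball 0 R) := by
  intro z hz
  rw [Metric.mem_ball, dist_zero_right, Real.norm_eq_abs] at hz
  obtain ⟨t, hzt, htR⟩ := exists_between hz
  have ht : 0 ≤ t := (abs_nonneg z).trans hzt.le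
  set P := FormalMultilinearSeries.ofScalars ℝ a
  have hrad : ENNReal.ofReal t ≤ P.radius := P.le_radius_of_summable_norm <| by
    simpa [P, FormalMultilinearSeries.ofScalars_norm, Real.coe_toNNReal _ ht,
      abs_of_nonneg (ha _)] using hconv t ht htR
  have hsum : P.sum = fun x => ∑' n, a n * x ^ n :=
    (FormalMultilinearSeries.ofScalarsSum_eq_tsum a).trans (funext fun x => by simp)
  rw [← hsum]
  have hzt' : ENNReal.ofReal |z| < ENNReal.ofReal t :=
    (ENNReal.ofReal_lt_ofReal_iff ((abs_nonneg z).trans_lt hzt)).2 hzt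
  refine (P.hasFPowerSeriesOnBall (pos_of_gt (hzt'.trans_le hrad))).analyticOnNhd z ?_
  rw [Metric.mem_eball, edist_dist, dist_zero_right, Real.norm_eq_abs]
  exact hzt'.trans_le hrad

lemma deriv_tsum_mul_pow_pos (ha : ∀ n, 0 ≤ a n)
    (hconv : ∀ x, 0 ≤ x → x < R → Summable fun n => a n * x ^ n)
    {M : ℕ} (hM : 1 ≤ M) (haM : 0 < a M) {x : ℝ} (hx : 0 < x) (hxR : x < R) :
    0 < deriv (fun x => ∑' n, a n * x ^ n) x := by
  set f := fun x => ∑' n, a n * x ^ n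
  have hg : MonotoneOn (fun z => f z - a M * z ^ M) (Ioo 0 R) := fun y hy z hz hyz => by
    linarith [mul_pow_sub_le_tsum_sub ha M hy.1.le hyz (hconv z (hy.1.le.trans hyz) hz.2)]
  have hIoo : Ioo 0 R ∈ 𝓝 x := Ioo_mem_nhds hx hxR
  have hg' : 0 ≤ deriv (fun z => f z - a M * z ^ M) x :=
    (derivWithin_of_mem_nhds (f := fun z => f z - a M * z ^ M) hIoo) ▸ hg.derivWithin_nonneg
  have hf : DifferentiableAt ℝ f x :=
    (analyticOnNhd_tsum_mul_pow ha hconv x (by simpa [abs_of_pos hx] using hxR)).differentiableAt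
  have hpow : 0 < a M * (M * x ^ (M - 1)) := by
    have : (0 : ℝ) < M := by exact_mod_cast hM
    positivity
  rw [deriv_fun_sub hf (by fun_prop), deriv_const_mul_field, deriv_pow_field] at hg'
  linarith

end PowerSeries

lemma MonotoneOn.le_of_tendsto_nhdsLT {f : ℝ → ℝ} {a b L : ℝ} (hf : MonotoneOn f (Ico a b))
    (hL : Tendsto f (𝓝[<] b) (𝓝 L)) {x : ℝ} (hx : x ∈ Ico a b) : f x ≤ L :=
  ge_of_tendsto hL <| by
    filter_upwards [Ioo_mem_nhdsLT hx.2] with z hz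
    exact hf hx ⟨hx.1.trans hz.1.le, hz.2⟩ hz.1.le

lemma tendsto_sub_rpow_nhdsLT {a s : ℝ} (hs : 0 < s) :
    Tendsto (fun x => (a - x) ^ s) (𝓝[<] a) (𝓝 0) := by
  have h : Tendsto (fun x => a - x) (𝓝 a) (𝓝 (a - a)) := tendsto_const_nhds.sub tendsto_id
  rw [sub_self] at h
  have h' := (continuousAt_rpow_const 0 s (Or.inr hs.le)).tendsto.comp
    (h.mono_left (nhdsWithin_le_nhds (s := Iio a)))
  rwa [zero_rpow hs.ne'] at h'

lemma Filter.Tendsto.div_rpow_of_rpow_div {α : Type*} {l : Filter α} {f e d : α → ℝ}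
    {A r p q : ℝ} (hq : q ≠ 0) (hr : r ≠ 0) (he : ∀ᶠ x in l, 0 < e x) (hd : ∀ᶠ x in l, 0 < d x)
    (hf : Tendsto (fun x => f x / e x ^ p) l (𝓝 A))
    (hed : Tendsto (fun x => e x ^ q / d x) l (𝓝 r)) :
    Tendsto (fun x => f x / d x ^ (p / q)) l (𝓝 (A * r ^ (p / q))) := by
  refine (hf.mul ((continuousAt_rpow_const r (p / q) (Or.inl hr)).tendsto.comp hed)).congr' ?_
  filter_upwards [he, hd] with x hex hdx
  rw [Function.comp_apply, div_rpow (rpow_nonneg hex.le _) hdx.le, ← rpow_mul hex.le,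
    mul_div_cancel₀ p hq]
  field_simp [(rpow_pos_of_pos hex p).ne']

section SharedBonds

noncomputable def sharedBondFraction (U V : ℝ → ℝ) (x w : ℝ) : ℝ :=
  w * U x * deriv V (w * x) / (deriv U x * V (w * x) + w * U x * deriv V (w * x))

variable {U V x₁ : ℝ → ℝ} {xU L wc : ℝ}

lemma tendsto_nhdsLT_of_mul_eq_one {xV : ℝ} (hwc : 0 < wc) (hwcV : wc * xU < xV)
    (hU : MonotoneOn U (Ico 0 xU)) (hUL : ∀ x ∈ Ico 0 xU, U x ≤ L)
    (hV : StrictMonoOn V (Ico 0 xV)) (hVnn : ∀ y ∈ Ico 0 xV, 0 ≤ V y)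
    (hVc : ContinuousOn V (Ioo 0 xV)) (hwceq : L * V (wc * xU) = 1)
    (hx₁ : ∀ᶠ w in 𝓝[>] wc, x₁ w ∈ Ioo 0 xU ∧ U (x₁ w) * V (w * x₁ w) = 1) :
    Tendsto x₁ (𝓝[>] wc) (𝓝[<] xU) := by
  refine tendsto_nhdsWithin_iff.2 ⟨tendsto_order.2 ⟨fun a ha => ?_,
    fun a ha => hx₁.mono fun w hw => hw.1.2.trans ha⟩, hx₁.mono fun w hw => hw.1.2⟩
  rcases le_or_gt a 0 with ha0 | ha0
  · exact hx₁.mono fun w hw => ha0.trans_lt hw.1.1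
  have hwa : wc * a < wc * xU := mul_lt_mul_of_pos_left ha hwc
  have hwa0 : 0 < wc * a := mul_pos hwc ha0
  have hL : 0 < L :=
    pos_of_mul_pos_left (hwceq ▸ one_pos) (hVnn _ ⟨hwa0.le.trans hwa.le, hwcV⟩)
  have hkey : U a * V (wc * a) < 1 := calc
    U a * V (wc * a) ≤ L * V (wc * a) :=
      mul_le_mul_of_nonneg_right (hUL a ⟨ha0.le, ha⟩) (hVnn _ ⟨hwa0.le, hwa.trans hwcV⟩)
    _ < L * V (wc * xU) := mul_lt_mul_of_pos_left
      (hV ⟨hwa0.le, hwa.trans hwcV⟩ ⟨hwa0.le.trans hwa.le, hwcV⟩ hwa) hL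
    _ = 1 := hwceq
  have hcont : ContinuousAt (fun w => w * a) wc := by fun_prop
  have hVa : ContinuousAt (fun w => U a * V (w * a)) wc :=
    continuousAt_const.mul <| (hVc.continuousAt (Ioo_mem_nhds hwa0 (hwa.trans hwcV))).comp
      (f := fun w => w * a) hcont
  -- If `x₁ w ≤ a`, monotonicity gives `1 = U (x₁ w) * V (w * x₁ w) ≤ U a * V (w * a) < 1`.
  filter_upwards [hx₁, nhdsWithin_le_nhds (hVa.eventually_lt_const hkey),
    nhdsWithin_le_nhds (hcont.eventually_lt_const (hwa.trans hwcV)), self_mem_nhdsWithin]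
    with w ⟨⟨hx0, hxU⟩, heq⟩ hlt hwaV (hw : wc < w)
  by_contra! hxa
  have hw0 : 0 < w := hwc.trans hw
  have hwx : w * x₁ w ≤ w * a := mul_le_mul_of_nonneg_left hxa hw0.le
  have hVx : 0 ≤ V (w * x₁ w) := hVnn _ ⟨by positivity, hwx.trans_lt hwaV⟩
  have hUx : 0 < U (x₁ w) := pos_of_mul_pos_left (heq ▸ one_pos) hVx
  have hUle : U (x₁ w) ≤ U a := hU ⟨hx0.le, hxU⟩ ⟨ha0.le, ha⟩ hxa
  have hVle : V (w * x₁ w) ≤ V (w * a) :=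
    hV.monotoneOn ⟨by positivity, hwx.trans_lt hwaV⟩ ⟨by positivity, hwaV⟩ hwx
  have := mul_le_mul hUle hVle hVx (hUx.le.trans hUle)
  linarith

lemma tendsto_sub_rpow_div_sub {c U0 : ℝ} (hx : Tendsto x₁ (𝓝[>] wc) (𝓝[<] xU))
    (hxeq : ∀ᶠ w in 𝓝[>] wc, U (x₁ w) * V (w * x₁ w) = 1)
    (hwceq : L * V (wc * xU) = 1) (hVd : DifferentiableAt ℝ V (wc * xU))
    (hU0 : Tendsto (fun x => (U x - L) / (xU - x) ^ (c - 1)) (𝓝[<] xU) (𝓝 U0))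
    (hU0ne : U0 ≠ 0) (hc2 : c < 2) :
    Tendsto (fun w => (xU - x₁ w) ^ (c - 1) / (w - wc)) (𝓝[>] wc)
      (𝓝 (-(L * deriv V (wc * xU) * xU) / (U0 * V (wc * xU)))) := by
  set y₀ := wc * xU
  have hx' : Tendsto x₁ (𝓝[>] wc) (𝓝 xU) := tendsto_nhds_of_tendsto_nhdsWithin hx
  have hy : Tendsto (fun w => w * x₁ w) (𝓝[>] wc) (𝓝 y₀) :=
    (tendsto_id.mono_left nhdsWithin_le_nhds).mul hx'
  have hVy : Tendsto (fun w => V (w * x₁ w)) (𝓝[>] wc) (𝓝 (V y₀)) :=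
    hVd.continuousAt.tendsto.comp hy
  -- `dslope` is the difference quotient completed by `deriv V y₀` at `y₀`, so `w * x₁ w ≠ y₀`
  -- is never needed.
  have hq : Tendsto (fun w => dslope V y₀ (w * x₁ w)) (𝓝[>] wc) (𝓝 (deriv V y₀)) := by
    have h := (continuousAt_dslope_same.2 hVd).tendsto.comp hy
    rwa [dslope_same] at h
  have hε : Tendsto (fun w => (xU - x₁ w) ^ (2 - c)) (𝓝[>] wc) (𝓝 0) :=
    (tendsto_sub_rpow_nhdsLT (by linarith)).comp hx
  have hden : Tendsto (fun w => (U (x₁ w) - L) / (xU - x₁ w) ^ (c - 1) * V (w * x₁ w)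
      - L * dslope V y₀ (w * x₁ w) * wc * (xU - x₁ w) ^ (2 - c)) (𝓝[>] wc)
      (𝓝 (U0 * V y₀)) := by
    simpa using ((hU0.comp hx).mul hVy).sub
      (((tendsto_const_nhds.mul hq).mul tendsto_const_nhds).mul hε)
  have hU0V : U0 * V y₀ ≠ 0 := mul_ne_zero hU0ne (right_ne_zero_of_mul_eq_one hwceq)
  refine (((tendsto_const_nhds.mul hq).mul hx').neg.div hden hU0V).congr' ?_
  filter_upwards [hxeq, hden.eventually_ne hU0V, self_mem_nhdsWithin, hx self_mem_nhdsWithin]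
    with w heq hdw (hw : wc < w) (hxw : x₁ w < xU)
  have hεpos : 0 < xU - x₁ w := sub_pos.2 hxw
  have hsplit : (xU - x₁ w) ^ (c - 1) * (xU - x₁ w) ^ (2 - c) = xU - x₁ w := by
    rw [← rpow_add hεpos]; norm_num
  have hs : (U (x₁ w) - L) / (xU - x₁ w) ^ (c - 1) * (xU - x₁ w) ^ (c - 1) = U (x₁ w) - L :=
    div_mul_cancel₀ _ (rpow_pos_of_pos hεpos _).ne'
  have hslope := sub_smul_dslope V y₀ (w * x₁ w)
  rw [smul_eq_mul] at hslope
  rw [Pi.div_apply, div_eq_div_iff hdw (sub_ne_zero.2 hw.ne')]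
  -- `0 = (U (x₁ w) - L) V (w x₁ w) + L (V (w x₁ w) - V y₀)` and `w x₁ - y₀ = (w - wc) x₁ - wc ε`.
  linear_combination (-V (w * x₁ w)) * hs + (L * dslope V y₀ (w * x₁ w) * wc) * hsplit
    - heq + hwceq - L * hslope

lemma tendsto_sharedBondFraction_div_sub_rpow {c B : ℝ} (hx : Tendsto x₁ (𝓝[>] wc) (𝓝[<] xU))
    (hL : Tendsto U (𝓝[<] xU) (𝓝 L)) (hVc : ContinuousAt V (wc * xU))
    (hV'c : ContinuousAt (deriv V) (wc * xU)) (hc2 : c < 2)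
    (hU' : Tendsto (fun x => deriv U x * (xU - x) ^ (2 - c)) (𝓝[<] xU) (𝓝 B))
    (hB : B * V (wc * xU) ≠ 0) :
    Tendsto (fun w => sharedBondFraction U V (x₁ w) w / (xU - x₁ w) ^ (2 - c))
      (𝓝[>] wc) (𝓝 (wc * L * deriv V (wc * xU) / (B * V (wc * xU)))) := by
  have hw : Tendsto (fun w : ℝ => w) (𝓝[>] wc) (𝓝 wc) := tendsto_id.mono_left nhdsWithin_le_nhds
  have hy : Tendsto (fun w => w * x₁ w) (𝓝[>] wc) (𝓝 (wc * xU)) :=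
    hw.mul (tendsto_nhds_of_tendsto_nhdsWithin hx)
  have hnum : Tendsto (fun w => w * U (x₁ w) * deriv V (w * x₁ w)) (𝓝[>] wc)
      (𝓝 (wc * L * deriv V (wc * xU))) :=
    (hw.mul (hL.comp hx)).mul (hV'c.tendsto.comp hy)
  have hden : Tendsto (fun w => deriv U (x₁ w) * (xU - x₁ w) ^ (2 - c) * V (w * x₁ w)
      + w * U (x₁ w) * deriv V (w * x₁ w) * (xU - x₁ w) ^ (2 - c)) (𝓝[>] wc)
      (𝓝 (B * V (wc * xU))) := by
    simpa using ((hU'.comp hx).mul (hVc.tendsto.comp hy)).add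
      (hnum.mul ((tendsto_sub_rpow_nhdsLT (by linarith)).comp hx))
  refine (hnum.div hden hB).congr fun w => ?_
  rw [Pi.div_apply, sharedBondFraction, div_div]
  ring_nf

theorem exists_pos_tendsto_sharedBondFraction_div_rpow {xV c U0 : ℝ}
    (hxU : 0 < xU) (hwc : 0 < wc) (hwcV : wc * xU < xV)
    (hU : MonotoneOn U (Ico 0 xU)) (hL : Tendsto U (𝓝[<] xU) (𝓝 L))
    (hV : StrictMonoOn V (Ico 0 xV)) (hVnn : ∀ y ∈ Ico 0 xV, 0 ≤ V y)
    (hVc : ContinuousOn V (Ioo 0 xV)) (hVd : DifferentiableAt ℝ V (wc * xU))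
    (hV'c : ContinuousAt (deriv V) (wc * xU)) (hD : 0 < deriv V (wc * xU))
    (hwceq : L * V (wc * xU) = 1)
    (hx₁ : ∀ᶠ w in 𝓝[>] wc, x₁ w ∈ Ioo 0 xU ∧ U (x₁ w) * V (w * x₁ w) = 1)
    (hc1 : 1 < c) (hc2 : c < 2) (hU0neg : U0 < 0)
    (hU0 : Tendsto (fun x => (U x - L) / (xU - x) ^ (c - 1)) (𝓝[<] xU) (𝓝 U0))
    (hU' : Tendsto (fun x => deriv U x * (xU - x) ^ (2 - c)) (𝓝[<] xU) (𝓝 ((c - 1) * |U0|))) :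
    ∃ A, 0 < A ∧ Tendsto (fun w => sharedBondFraction U V (x₁ w) w /
      (w - wc) ^ ((2 - c) / (c - 1))) (𝓝[>] wc) (𝓝 A) := by
  have hV₀ : 0 < V (wc * xU) :=
    (hVnn _ ⟨by positivity, hwcV⟩).lt_of_ne' (right_ne_zero_of_mul_eq_one hwceq)
  have hL0 : 0 < L := pos_of_mul_pos_left (hwceq ▸ one_pos) hV₀.le
  have hlim : Tendsto x₁ (𝓝[>] wc) (𝓝[<] xU) :=
    tendsto_nhdsLT_of_mul_eq_one hwc hwcV hU (fun x hx => hU.le_of_tendsto_nhdsLT hL hx)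
      hV hVnn hVc hwceq hx₁
  have hrate := tendsto_sub_rpow_div_sub hlim (hx₁.mono fun w hw => hw.2) hwceq hVd hU0
    hU0neg.ne hc2
  have hB : 0 < (c - 1) * |U0| := mul_pos (by linarith) (abs_pos.2 hU0neg.ne)
  have hθ := tendsto_sharedBondFraction_div_sub_rpow hlim hL hVd.continuousAt hV'c hc2 hU' (by positivity)
  have hR : 0 < -(L * deriv V (wc * xU) * xU) / (U0 * V (wc * xU)) :=
    div_pos_of_neg_of_neg (neg_neg_of_pos (by positivity))
      (mul_neg_of_neg_of_pos hU0neg hV₀)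
  refine ⟨_, ?_, hθ.div_rpow_of_rpow_div (by linarith) hR.ne' ?_ ?_ hrate⟩
  · have := rpow_pos_of_pos hR ((2 - c) / (c - 1))
    positivity
  · exact hlim.eventually (eventually_nhdsWithin_of_forall fun x (hx : x < xU) => sub_pos.2 hx)
  · exact eventually_nhdsWithin_of_forall fun w (hw : wc < w) => sub_pos.2 hw

end SharedBonds

theorem stmt_19_general
    (p b : ℕ → ℝ)
    (hp : ∀ n, 0 ≤ p n)
    (hb : ∀ n, 0 ≤ b n)
    (hbM : ∃ M, 1 ≤ M ∧ 0 < b M)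
    (U V : ℝ → ℝ)
    (hU : ∀ x, U x = ∑' n, p n * x ^ n)
    (hV : ∀ x, V x = ∑' n, b n * x ^ n)
    (xU xV : ℝ) (hxU0 : 0 < xU)
    (hUconv : ∀ x : ℝ, 0 ≤ x → x < xU → Summable fun n => p n * x ^ n)
    (hVconv : ∀ x : ℝ, 0 ≤ x → x < xV → Summable fun n => b n * x ^ n)
    (L : ℝ) (hL : Filter.Tendsto U (𝓝[<] xU) (𝓝 L))
    (wc : ℝ) (hwc : wc ∈ Set.Ioo 1 (xV / xU)) (hwceq : L * V (wc * xU) = 1)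
    (x₁ : ℝ → ℝ)
    (hx₁ : ∀ w ∈ Set.Ioo wc (xV / xU),
      x₁ w ∈ Set.Ioo 0 xU ∧ U (x₁ w) * V (w * x₁ w) = 1)
    (c U0 : ℝ) (hc1 : 1 < c) (hc2 : c < 2) (hU0neg : U0 < 0)
    (hU0 : Filter.Tendsto (fun x => (U x - L) / (xU - x) ^ (c - 1))
      (𝓝[<] xU) (𝓝 U0))
    (hU' : Filter.Tendsto (fun x => deriv U x * (xU - x) ^ (2 - c))
      (𝓝[<] xU) (𝓝 ((c - 1) * |U0|))) :
    ∃ A : ℝ, 0 < A ∧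
      Filter.Tendsto
        (fun w => (w * U (x₁ w) * deriv V (w * x₁ w) /
            (deriv U (x₁ w) * V (w * x₁ w) + w * U (x₁ w) * deriv V (w * x₁ w))) /
          (w - wc) ^ ((2 - c) / (c - 1)))
        (𝓝[>] wc) (𝓝 A) := by
  obtain ⟨M, hM, hbM⟩ := hbM
  have hwcV : wc * xU < xV := (lt_div_iff₀ hxU0).1 hwc.2
  have hVan : AnalyticOnNhd ℝ V (Metric.ball 0 xV) :=
    funext hV ▸ analyticOnNhd_tsum_mul_pow hb hVconv
  have hball : Ioo 0 xV ⊆ Metric.ball 0 xV := fun y hy => by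
    simpa [abs_of_pos hy.1] using hy.2
  have hy₀ : wc * xU ∈ Ioo 0 xV := ⟨by nlinarith [hwc.1], hwcV⟩
  exact exists_pos_tendsto_sharedBondFraction_div_rpow hxU0 (one_pos.trans hwc.1) hwcV
    (funext hU ▸ monotoneOn_tsum_mul_pow hp hUconv) hL
    (funext hV ▸ strictMonoOn_tsum_mul_pow hb hVconv hM hbM)
    (fun y hy => hV y ▸ tsum_nonneg fun n => mul_nonneg (hb n) (pow_nonneg hy.1 n))
    (hVan.continuousOn.mono hball) (hVan _ (hball hy₀)).differentiableAt
    (hVan.deriv _ (hball hy₀)).continuousAt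
    (funext hV ▸ deriv_tsum_mul_pow_pos hb hVconv hM hbM hy₀.1 hwcV) hwceq
    (by filter_upwards [Ioo_mem_nhdsGT hwc.2] using hx₁) hc1 hc2 hU0neg hU0 hU'

/-- If additionally 1 < c < 2, (U(x) − U(x_U⁻))/(x_U−x)^(c−1) → U_0 < 0
and U'(x)·(x_U−x)^(2−c) → (c−1)|U_0| as x → x_U⁻, then the fraction of shared bonds
θ(w) (evaluated along x₁(w)) satisfies θ(w) ~ A·(w−w_c)^((2−c)/(c−1)) as w → w_c⁺,
for some constant A > 0. -/
theorem stmt_19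
    (p b : ℕ → ℝ)
    (hp : ∀ n, 0 ≤ p n) (hp0 : p 0 = 0)
    (hb : ∀ n, 0 ≤ b n) (hb0 : 0 < b 0)
    (hpN : ∃ N, 1 ≤ N ∧ 0 < p N) (hbM : ∃ M, 1 ≤ M ∧ 0 < b M)
    (U V : ℝ → ℝ)
    (hU : ∀ x, U x = ∑' n, p n * x ^ n)
    (hV : ∀ x, V x = ∑' n, b n * x ^ n)
    (xU xV : ℝ) (hxU0 : 0 < xU) (hxUV : xU < xV) (hxV1 : xV ≤ 1)
    (hUconv : ∀ x : ℝ, 0 ≤ x → x < xU → Summable fun n => p n * x ^ n)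
    (hUdiv : ∀ x : ℝ, xU < x → ¬ Summable fun n => p n * x ^ n)
    (hVconv : ∀ x : ℝ, 0 ≤ x → x < xV → Summable fun n => b n * x ^ n)
    (hVdiv : ∀ x : ℝ, xV < x → ¬ Summable fun n => b n * x ^ n)
    (hVinf : Filter.Tendsto V (𝓝[<] xV) Filter.atTop)
    (L : ℝ) (hL : Filter.Tendsto U (𝓝[<] xU) (𝓝 L))
    (hsub : L * V xU < 1)
    (wc : ℝ) (hwc : wc ∈ Set.Ioo 1 (xV / xU)) (hwceq : L * V (wc * xU) = 1)
    (x₁ : ℝ → ℝ)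
    (hx₁ : ∀ w ∈ Set.Ioo wc (xV / xU),
      x₁ w ∈ Set.Ioo 0 xU ∧ U (x₁ w) * V (w * x₁ w) = 1)
    (hx₁uniq : ∀ w ∈ Set.Ioo wc (xV / xU), ∀ x ∈ Set.Ioo 0 xU,
      U x * V (w * x) = 1 → x = x₁ w)
    (c U0 : ℝ) (hc1 : 1 < c) (hc2 : c < 2) (hU0neg : U0 < 0)
    (hU0 : Filter.Tendsto (fun x => (U x - L) / (xU - x) ^ (c - 1))
      (𝓝[<] xU) (𝓝 U0))
    (hU' : Filter.Tendsto (fun x => deriv U x * (xU - x) ^ (2 - c))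
      (𝓝[<] xU) (𝓝 ((c - 1) * |U0|))) :
    ∃ A : ℝ, 0 < A ∧
      Filter.Tendsto
        (fun w => (w * U (x₁ w) * deriv V (w * x₁ w) /
            (deriv U (x₁ w) * V (w * x₁ w) + w * U (x₁ w) * deriv V (w * x₁ w))) /
          (w - wc) ^ ((2 - c) / (c - 1)))
        (𝓝[>] wc) (𝓝 A) :=
  stmt_19_general p b hp hb hbM U V hU hV xU xV hxU0 hUconv hVconv L hL wc hwc hwceq x₁ hx₁ c U0 hc1
    hc2 hU0neg hU0 hU'
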